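/- arXiv:2306.16806 — 10 statements merged into one kernel-verified Lean document; each statement's English description precedes it below -/
import Mathlib

section
/- Let X be a T0 topological space and let D(X) be the collection of directed-open subsets of X. Then D(X) is a topology on X, and the specialization order of (X, D(X)) coincides with that of X. -/
open Set

variable {X : Type*} [TopologicalSpace X]

/-- The specialization order of the paper: `x ⊑ y` iff `x ∈ cl {y}`. -/
def specLe (x y : X) : Prop := x ∈ closure {y}

/-- A directed set `D` converges to `x` iff it meets every open neighborhood of `x`. -/
def DConv (D : Set X) (x : X) : Prop :=
  ∀ U : Set X, IsOpen U → x ∈ U → (D ∩ U).Nonempty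

/-- `U` is directed-open: every directed subset converging to a point of `U` meets `U`. -/
def DirOpen (U : Set X) : Prop :=
  ∀ (D : Set X) (x : X), D.Nonempty → DirectedOn specLe D → DConv D x → x ∈ U →
    (D ∩ U).Nonempty

lemma dirOpen_of_isOpen {U : Set X} (hU : IsOpen U) : DirOpen U :=
  fun _ _ _ _ hc hx => hc U hU hx

lemma dirOpen_upclosed {U : Set X} (hU : DirOpen U) {x y : X} (hx : x ∈ U)
    (hxy : specLe x y) : y ∈ U := by
  have hconv : DConv ({y} : Set X) x := by
    intro V hV hxV
    have := (mem_closure_iff.mp hxy) V hV hxV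
    obtain ⟨z, hz1, hz2⟩ := this
    exact ⟨z, hz2, hz1⟩
  have hdir : DirectedOn specLe ({y} : Set X) := by
    intro a ha b hb
    rw [mem_singleton_iff] at ha hb
    exact ⟨y, rfl, by rw [ha]; exact subset_closure rfl,
      by rw [hb]; exact subset_closure rfl⟩
  obtain ⟨z, hz1, hz2⟩ := hU {y} x ⟨y, rfl⟩ hdir hconv hx
  rwa [mem_singleton_iff.mp hz1] at hz2

/-- The directed-open sets form a topology, and the specialization order of `(X, D(X))`
(namely `x ⊑ y` iff every directed-open set containing `x` contains `y`) coincides with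
the specialization order of `X`. -/
theorem stmt_1 [T0Space X] :
    (DirOpen (Set.univ : Set X) ∧
      (∀ U V : Set X, DirOpen U → DirOpen V → DirOpen (U ∩ V)) ∧
      (∀ S : Set (Set X), (∀ U ∈ S, DirOpen U) → DirOpen (⋃₀ S))) ∧
    (∀ x y : X, (∀ U : Set X, DirOpen U → x ∈ U → y ∈ U) ↔ specLe x y) := by
  refine ⟨⟨?_, ?_, ?_⟩, ?_⟩
  · intro D x hD _ _ _
    exact hD.imp fun d hd => ⟨hd, mem_univ d⟩
  · intro U V hU hV D x hD hdir hconv hx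
    obtain ⟨d1, hd1D, hd1U⟩ := hU D x hD hdir hconv hx.1
    obtain ⟨d2, hd2D, hd2V⟩ := hV D x hD hdir hconv hx.2
    obtain ⟨d, hdD, h1, h2⟩ := hdir d1 hd1D d2 hd2D
    exact ⟨d, hdD, dirOpen_upclosed hU hd1U h1, dirOpen_upclosed hV hd2V h2⟩
  · intro S hS D x hD hdir hconv hx
    obtain ⟨U, hUS, hxU⟩ := hx
    obtain ⟨d, hdD, hdU⟩ := hS U hUS D x hD hdir hconv hxU
    exact ⟨d, hdD, U, hUS, hdU⟩
  · intro x y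
    constructor
    · intro h
      by_contra hxy
      have hopen : IsOpen ((closure {y} : Set X)ᶜ) := isClosed_closure.isOpen_compl
      have := h _ (dirOpen_of_isOpen hopen) hxy
      exact this (subset_closure rfl)
    · intro h U hU hx
      exact dirOpen_upclosed hU hx h
end

section
/- For any T0 topological space X, the space (X, D(X)) is a directed space, i.e., every subset of X that is directed-open with respect to the topology D(X) already belongs to D(X). -/
open Set

variable {X : Type*} [TopologicalSpace X]

/-- The specialization order of `(X, D(X))`. -/
def dSpecLe (x y : X) : Prop := ∀ U : Set X, DirOpen U → x ∈ U → y ∈ U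

/-- Convergence of a directed set in the topology `D(X)`. -/
def dConv (D : Set X) (x : X) : Prop :=
  ∀ U : Set X, DirOpen U → x ∈ U → (D ∩ U).Nonempty

/-- `(X, D(X))` is a directed space: every subset directed-open with respect to `D(X)`
already belongs to `D(X)`. -/
theorem stmt_3 [T0Space X] (U : Set X)
    (hU : ∀ (D : Set X) (x : X), D.Nonempty → DirectedOn dSpecLe D → dConv D x → x ∈ U →
      (D ∩ U).Nonempty) :
    DirOpen U := by
  intro D x hne hdir hconv hx
  have hmono : ∀ a b : X, specLe a b → dSpecLe a b := by
    intro a b hab V hV ha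
    have h1 : DConv {b} a := by
      intro W hW haW
      obtain ⟨y, hy1, hy2⟩ := (mem_closure_iff.mp hab) W hW haW
      exact ⟨y, hy2, hy1⟩
    have := hV {b} a ⟨b, rfl⟩ (by
      intro p hp q hq
      refine ⟨b, rfl, ?_, ?_⟩
      · rw [mem_singleton_iff] at hp; rw [hp]; exact subset_closure rfl
      · rw [mem_singleton_iff] at hq; rw [hq]; exact subset_closure rfl) h1 ha
    obtain ⟨y, hy1, hy2⟩ := this
    exact hy1 ▸ hy2
  have hdir' : DirectedOn dSpecLe D := by
    intro a ha b hb
    obtain ⟨c, hc, hac, hbc⟩ := hdir a ha b hb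
    exact ⟨c, hc, hmono a c hac, hmono b c hbc⟩
  have hconv' : dConv D x := fun V hV hxV => hV D x hne hdir hconv hxV
  exact hU D x hne hdir' hconv' hx
end

section
/- Let P be a poset and C a convergence class of pairs (D, x), with D a directed subset of P and x ∈ P, such that C contains all pairs ({y}, x) with x ≤ y, and for every (D, x) ∈ C, x lies in the cut D^δ. Then the specialization order of the topological space (P, C(P)) determined by C equals the original order ≤ on P. -/
open Set

variable {P : Type*} [PartialOrder P]

/-- The (monotone net given by the) directed set `D` is eventually in `U`. -/
def EvIn (D U : Set P) : Prop := ∃ d ∈ D, ∀ e ∈ D, d ≤ e → e ∈ U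

/-- The topology determined by the convergence class `C`:
`U` is open iff every directed set in `C` converging to a point of `U` is eventually in `U`. -/
def COpen (C : Set (Set P × P)) (U : Set P) : Prop :=
  ∀ p ∈ C, p.2 ∈ U → EvIn p.1 U

/-- The cut `D^δ`: lower bounds of the set of upper bounds of `D`. -/
def cut (D : Set P) : Set P := {x | ∀ y : P, (∀ d ∈ D, d ≤ y) → x ≤ y}

/-- The specialization order of `(P, C(P))` equals the original order. -/
theorem stmt_6 (C : Set (Set P × P))
    (hC : ∀ p ∈ C, p.1.Nonempty ∧ DirectedOn (· ≤ ·) p.1)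
    (hsingle : ∀ x y : P, x ≤ y → (({y} : Set P), x) ∈ C)
    (hcut : ∀ p ∈ C, p.2 ∈ cut p.1) :
    ∀ x y : P, (∀ U : Set P, COpen C U → x ∈ U → y ∈ U) ↔ x ≤ y := by
  intro x y
  constructor
  · intro h
    by_contra hxy
    have hopen : COpen C {z | ¬ z ≤ y} := by
      intro p hp hp2
      by_contra hev
      have hall : ∀ d ∈ p.1, d ≤ y := by
        intro d hd
        simp only [EvIn, not_exists, not_and, mem_setOf_eq, not_forall] at hev
        obtain ⟨e, he, hde, hey⟩ := hev d hd
        push_neg at hey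
        exact hde.trans hey
      exact hp2 (hcut p hp y hall)
    exact h _ hopen hxy le_rfl
  · intro hxy U hU hxU
    obtain ⟨d, hd, hev⟩ := hU _ (hsingle x y hxy) hxU
    rcases hd with rfl
    exact hev d rfl le_rfl
end

section
/- Let P be a poset and C a convergence class consisting of pairs (D, x) with D directed and x ∈ D^δ, containing all pairs ({y}, x) with x ≤ y. Then the space (P, C(P)) is a directed space. -/
open Set

variable {P : Type*} [PartialOrder P]

/-- The specialization order of `(P, C(P))`. -/
def cLe (C : Set (Set P × P)) (x y : P) : Prop :=
  ∀ U : Set P, COpen C U → x ∈ U → y ∈ U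

/-- Convergence of a directed set in the topology `C(P)`. -/
def cConv (C : Set (Set P × P)) (D : Set P) (x : P) : Prop :=
  ∀ U : Set P, COpen C U → x ∈ U → (D ∩ U).Nonempty

/-! If `(D, x) ∈ C` with `x ∈ U` were not eventually in `U`, then `D \ U` would be cofinal in `D`.
A cofinal part of a directed set is directed and still converges to `x` in `C(P)`; it is directed
for the specialization order too, since `({y}, x) ∈ C` for `x ≤ y` makes `≤` refine it. Being
disjoint from `U`, it contradicts the hypothesis on `U`. -/

theorem not_evIn_iff {D U : Set P} : ¬EvIn D U ↔ ∀ d ∈ D, ∃ e ∈ D, d ≤ e ∧ e ∉ U := by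
  simp only [EvIn, not_exists, not_and, not_forall, exists_prop]

theorem Set.Nonempty.diff_of_not_evIn {D U : Set P} (hD : D.Nonempty) (h : ¬EvIn D U) :
    (D \ U).Nonempty :=
  let ⟨d, hd⟩ := hD
  let ⟨e, he, _, heU⟩ := not_evIn_iff.1 h d hd
  ⟨e, he, heU⟩

theorem DirectedOn.diff_of_not_evIn {D U : Set P} (hD : DirectedOn (· ≤ ·) D) (h : ¬EvIn D U) :
    DirectedOn (· ≤ ·) (D \ U) := by
  rintro a ⟨ha, -⟩ b ⟨hb, -⟩
  obtain ⟨c, hc, hac, hbc⟩ := hD a ha b hb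
  obtain ⟨e, he, hce, heU⟩ := not_evIn_iff.1 h c hc
  exact ⟨e, ⟨he, heU⟩, hac.trans hce, hbc.trans hce⟩

theorem cConv_diff_of_not_evIn {C : Set (Set P × P)} {D U : Set P} {x : P} (hDx : (D, x) ∈ C)
    (h : ¬EvIn D U) : cConv C (D \ U) x := by
  intro V hV hxV
  obtain ⟨d, hd, hdV⟩ := hV (D, x) hDx hxV
  obtain ⟨e, he, hde, heU⟩ := not_evIn_iff.1 h d hd
  exact ⟨e, ⟨he, heU⟩, hdV e he hde⟩

theorem cLe_of_le {C : Set (Set P × P)} (hsingle : ∀ x y : P, x ≤ y → (({y} : Set P), x) ∈ C)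
    {x y : P} (hxy : x ≤ y) : cLe C x y := by
  intro V hV hxV
  obtain ⟨d, rfl, hdV⟩ := hV _ (hsingle x y hxy) hxV
  exact hdV d rfl le_rfl

theorem stmt_7_general (C : Set (Set P × P))
    (hC : ∀ p ∈ C, p.1.Nonempty ∧ DirectedOn (· ≤ ·) p.1)
    (hsingle : ∀ x y : P, x ≤ y → (({y} : Set P), x) ∈ C)
    (U : Set P)
    (hU : ∀ (D : Set P) (x : P), D.Nonempty → DirectedOn (cLe C) D → cConv C D x → x ∈ U →
      (D ∩ U).Nonempty) :
    COpen C U := by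
  rintro ⟨D, x⟩ hDx hxU
  by_contra hev
  obtain ⟨hne, hdir⟩ := hC _ hDx
  have hdir' : DirectedOn (cLe C) (D \ U) :=
    (hdir.diff_of_not_evIn hev).mono fun _ _ ↦ cLe_of_le hsingle
  obtain ⟨e, ⟨-, heU⟩, heU'⟩ :=
    hU (D \ U) x (hne.diff_of_not_evIn hev) hdir' (cConv_diff_of_not_evIn hDx hev) hxU
  exact heU heU'

/-- `(P, C(P))` is a directed space: every subset that is directed-open for `C(P)` is open. -/
theorem stmt_7 (C : Set (Set P × P))
    (hC : ∀ p ∈ C, p.1.Nonempty ∧ DirectedOn (· ≤ ·) p.1)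
    (hsingle : ∀ x y : P, x ≤ y → (({y} : Set P), x) ∈ C)
    (hcut : ∀ p ∈ C, p.2 ∈ cut p.1)
    (U : Set P)
    (hU : ∀ (D : Set P) (x : P), D.Nonempty → DirectedOn (cLe C) D → cConv C D x → x ∈ U →
      (D ∩ U).Nonempty) :
    COpen C U :=
  stmt_7_general C hC hsingle U hU
end

section
/- Let P be a poset and C a convergence class with all ({y}, x) for x ≤ y in C and with x ∈ D^δ for every (D, x) ∈ C. A subset F of P is closed in (P, C(P)) if and only if for every (D, x) ∈ C with D ⊆ F, one has x ∈ F. -/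
open Set

variable {P : Type*} [PartialOrder P]

/-- `F` is closed in `(P, C(P))` iff `F` is closed under the convergence class `C`. -/
theorem stmt_8 (C : Set (Set P × P))
    (hC : ∀ p ∈ C, p.1.Nonempty ∧ DirectedOn (· ≤ ·) p.1)
    (hsingle : ∀ x y : P, x ≤ y → (({y} : Set P), x) ∈ C)
    (hcut : ∀ p ∈ C, p.2 ∈ cut p.1)
    (F : Set P) :
    COpen C Fᶜ ↔ ∀ p ∈ C, p.1 ⊆ F → p.2 ∈ F := by
  constructor
  · intro hopen p hp hsub
    by_contra hx
    obtain ⟨d, hd, hev⟩ := hopen p hp hx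
    exact hev d hd le_rfl (hsub hd)
  · intro h p hp hx
    -- F is a lower set
    have hlow : ∀ a b : P, a ≤ b → b ∈ F → a ∈ F := by
      intro a b hab hb
      exact h _ (hsingle a b hab) (by simpa using hb)
    by_contra hev
    have hx' : p.2 ∈ F := by
      apply h p hp
      intro d hd
      by_contra hdF
      exact hev ⟨d, hd, fun e he hde heF => hdF (hlow d e hde heF)⟩
    exact hx hx'
end

section
/- Let X be a set, C a class of pairs (ξ, x) with ξ a net in X and x ∈ X, and Y any topological space. A map f : (X, C(X)) → Y is continuous if and only if for every (ξ, x) ∈ C, the net f(ξ) converges to f(x) in Y. -/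
open Set Filter

/-- The topology `C(X)` determined by a convergence class `C`, where a net is modelled
by its filter of eventual sets: `U` is open iff for every `(ξ, x) ∈ C` with `x ∈ U`,
the net `ξ` is eventually in `U` (i.e. `U` belongs to the eventuality filter of `ξ`). -/
def cTop {X : Type*} (C : Set (Filter X × X)) : TopologicalSpace X where
  IsOpen U := ∀ p ∈ C, p.2 ∈ U → U ∈ p.1
  isOpen_univ := fun p _ _ => Filter.univ_mem
  isOpen_inter := fun U V hU hV p hp hx =>
    Filter.inter_mem (hU p hp hx.1) (hV p hp hx.2)
  isOpen_sUnion := fun S hS p hp hx => by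
    obtain ⟨U, hUS, hxU⟩ := hx
    exact Filter.mem_of_superset (hS U hUS p hp hxU) (Set.subset_sUnion_of_mem hUS)

/-- A map `f : (X, C(X)) → Y` is continuous iff for every `(ξ, x) ∈ C` the net
`f(ξ)` converges to `f x` in `Y`. -/
theorem stmt_9 {X Y : Type*} [TopologicalSpace Y] (C : Set (Filter X × X)) (f : X → Y) :
    @Continuous X Y (cTop C) _ f ↔ ∀ p ∈ C, Filter.Tendsto f p.1 (nhds (f p.2)) := by
  constructor
  · intro hf p hp
    have hξ : Filter.Tendsto id p.1 (@nhds X (cTop C) p.2) := by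
      rw [@tendsto_nhds]
      intro U hU hxU
      simpa using hU p hp hxU
    exact ((@Continuous.tendsto X Y (cTop C) _ f hf p.2).comp hξ :)
  · intro h
    rw [@continuous_def]
    intro V hV p hp hx
    exact h p hp (hV.mem_nhds hx)
end

section
/- Let X be a directed space. Then the D-completion X^d of X carries the Scott topology of the dcpo X̃; that is, every Scott open subset of X̃ is a union of sets of the form ◇U = { A ∈ X̃ : A ∩ U ≠ ∅ } with U ⊆ X open, so X^d is the Scott completion of X. -/
open Set

variable {X : Type*} [TopologicalSpace X]

/-- `X̃` as a set: the least subfamily of `Γ(X)` (nonempty closed sets, ordered by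
inclusion, with directed suprema given by closures of unions) containing all point
closures and closed under directed suprema, i.e. the d-closure of `Ψ(X)` in `Γ(X)`. -/
def XtildeSet (X : Type*) [TopologicalSpace X] : Set (Set X) :=
  ⋂₀ {S : Set (Set X) | S ⊆ {A | IsClosed A ∧ A.Nonempty} ∧
      (∀ x : X, closure {x} ∈ S) ∧
      ∀ 𝒟 ⊆ S, 𝒟.Nonempty → DirectedOn (· ⊆ ·) 𝒟 → closure (⋃₀ 𝒟) ∈ S}

/-- The dcpo `X̃`, ordered by inclusion. -/
abbrev Xtilde (X : Type*) [TopologicalSpace X] := {A : Set X // A ∈ XtildeSet X}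

/-- A Scott open subset of the dcpo `X̃`. -/
def ScottOpen (V : Set (Xtilde X)) : Prop :=
  IsUpperSet V ∧ ∀ d : Set (Xtilde X), d.Nonempty → DirectedOn (· ≤ ·) d →
    ∀ a : Xtilde X, IsLUB d a → a ∈ V → (d ∩ V).Nonempty

/-- `◇U = { A ∈ X̃ : A ∩ U ≠ ∅ }`. -/
def diam (U : Set X) : Set (Xtilde X) := {A | (A.1 ∩ U).Nonempty}

section Aux

lemma xtilde_min {S : Set (Set X)} (h1 : S ⊆ {A | IsClosed A ∧ A.Nonempty})
    (h2 : ∀ x : X, closure {x} ∈ S)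
    (h3 : ∀ 𝒟 ⊆ S, 𝒟.Nonempty → DirectedOn (· ⊆ ·) 𝒟 → closure (⋃₀ 𝒟) ∈ S) :
    XtildeSet X ⊆ S := fun _ hA => hA S ⟨h1, h2, h3⟩

lemma xtilde_closed_nonempty : XtildeSet X ⊆ {A | IsClosed A ∧ A.Nonempty} := by
  intro A hA
  refine hA {A | IsClosed A ∧ A.Nonempty} ⟨Subset.rfl,
    fun x => ⟨isClosed_closure, ⟨x, subset_closure rfl⟩⟩, ?_⟩
  intro 𝒟 h𝒟 ⟨C, hC⟩ _
  obtain ⟨c, hc⟩ := (h𝒟 hC).2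
  exact ⟨isClosed_closure, ⟨c, subset_closure ⟨C, hC, hc⟩⟩⟩

lemma mem_xtilde_closure_singleton (x : X) : closure {x} ∈ XtildeSet X :=
  fun _ hS => hS.2.1 x

lemma xtilde_dsup {𝒟 : Set (Set X)} (h : 𝒟 ⊆ XtildeSet X) (hne : 𝒟.Nonempty)
    (hdir : DirectedOn (· ⊆ ·) 𝒟) : closure (⋃₀ 𝒟) ∈ XtildeSet X :=
  fun S hS => hS.2.2 𝒟 (fun A hA => h hA S hS) hne hdir

/-- Any LUB of a directed family in `X̃` is the closure of the union of the carriers. -/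
lemma xtilde_lub_eq {d : Set (Xtilde X)} (hne : d.Nonempty) (hdir : DirectedOn (· ≤ ·) d)
    {a : Xtilde X} (ha : IsLUB d a) : a.1 = closure (⋃₀ (Subtype.val '' d)) := by
  set 𝒟 : Set (Set X) := Subtype.val '' d with h𝒟def
  have h𝒟sub : 𝒟 ⊆ XtildeSet X := by rintro _ ⟨B, _, rfl⟩; exact B.2
  have h𝒟ne : 𝒟.Nonempty := hne.image _
  have h𝒟dir : DirectedOn (· ⊆ ·) 𝒟 := by
    rintro _ ⟨B, hB, rfl⟩ _ ⟨C, hC, rfl⟩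
    obtain ⟨E, hE, hBE, hCE⟩ := hdir B hB C hC
    exact ⟨E.1, ⟨E, hE, rfl⟩, hBE, hCE⟩
  have hc : closure (⋃₀ 𝒟) ∈ XtildeSet X := xtilde_dsup h𝒟sub h𝒟ne h𝒟dir
  refine le_antisymm ?_ ?_
  · have hub : (⟨closure (⋃₀ 𝒟), hc⟩ : Xtilde X) ∈ upperBounds d := by
      intro B hB
      show B.1 ⊆ closure (⋃₀ 𝒟)
      exact (subset_sUnion_of_mem (mem_image_of_mem Subtype.val hB)).trans subset_closure
    exact ha.2 hub
  · refine closure_minimal ?_ (xtilde_closed_nonempty a.2).1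
    rintro x ⟨_, ⟨B, hB, rfl⟩, hx⟩
    exact ha.1 hB hx

/-- Lifting a directed family of `XtildeSet` to `Xtilde`, with its LUB. -/
lemma xtilde_lift_lub {𝒟 : Set (Set X)} (h : 𝒟 ⊆ XtildeSet X) (hne : 𝒟.Nonempty)
    (hdir : DirectedOn (· ⊆ ·) 𝒟) :
    {B : Xtilde X | B.1 ∈ 𝒟}.Nonempty ∧
    DirectedOn (· ≤ ·) {B : Xtilde X | B.1 ∈ 𝒟} ∧
    IsLUB {B : Xtilde X | B.1 ∈ 𝒟} ⟨closure (⋃₀ 𝒟), xtilde_dsup h hne hdir⟩ := by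
  refine ⟨?_, ?_, ?_, ?_⟩
  · obtain ⟨C, hC⟩ := hne
    exact ⟨⟨C, h hC⟩, hC⟩
  · rintro B hB C hC
    obtain ⟨E, hE, hBE, hCE⟩ := hdir B.1 hB C.1 hC
    exact ⟨⟨E, h hE⟩, hE, hBE, hCE⟩
  · intro B hB
    show B.1 ⊆ closure (⋃₀ 𝒟)
    exact (subset_sUnion_of_mem hB).trans subset_closure
  · intro b hb
    show closure (⋃₀ 𝒟) ⊆ b.1
    refine closure_minimal (sUnion_subset fun C hC => ?_) (xtilde_closed_nonempty b.2).1
    exact hb (show (⟨C, h hC⟩ : Xtilde X) ∈ _ from hC)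

end Aux

/-- For a directed space `X`, the topology `{◇U : U open in X}` of the D-completion `X^d`
is exactly the Scott topology of the dcpo `X̃`: each `◇U` is Scott open, and every Scott
open set is a union of sets of the form `◇U`; hence `X^d` is the Scott completion of `X`. -/
theorem stmt_10 [T0Space X] (hX : ∀ U : Set X, DirOpen U → IsOpen U) :
    (∀ U : Set X, IsOpen U → ScottOpen (diam U)) ∧
    (∀ V : Set (Xtilde X), ScottOpen V → ∀ A ∈ V,
      ∃ U : Set X, IsOpen U ∧ A ∈ diam U ∧ diam U ⊆ V) := by
  constructor
  · -- each `◇U` is Scott open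
    intro U hU
    constructor
    · rintro A B hAB ⟨x, hxA, hxU⟩
      exact ⟨x, hAB hxA, hxU⟩
    · intro d hne hdir a ha haU
      obtain ⟨x, hxa, hxU⟩ := haU
      rw [xtilde_lub_eq hne hdir ha] at hxa
      obtain ⟨y, hyU, hy⟩ := mem_closure_iff.1 hxa U hU hxU
      obtain ⟨_, ⟨B, hB, rfl⟩, hyB⟩ := hy
      exact ⟨B, hB, y, hyB, hyU⟩
  · -- every Scott open is a union of `◇U`'s
    intro V hV A hA
    set U : Set X :=
      {y | (⟨closure {y}, mem_xtilde_closure_singleton y⟩ : Xtilde X) ∈ V} with hUdef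
    refine ⟨U, ?_, ?_, ?_⟩
    · -- `U` is open since `X` is a directed space
      refine hX U ?_
      intro D x hDne hDdir hconv hxU
      set 𝒟 : Set (Set X) := (fun y => closure {y}) '' D with h𝒟def
      have h𝒟sub : 𝒟 ⊆ XtildeSet X := by
        rintro _ ⟨y, _, rfl⟩; exact mem_xtilde_closure_singleton y
      have h𝒟ne : 𝒟.Nonempty := hDne.image _
      have h𝒟dir : DirectedOn (· ⊆ ·) 𝒟 := by
        rintro _ ⟨y, hy, rfl⟩ _ ⟨z, hz, rfl⟩
        obtain ⟨w, hw, hyw, hzw⟩ := hDdir y hy z hz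
        exact ⟨closure {w}, ⟨w, hw, rfl⟩,
          closure_minimal (singleton_subset_iff.2 hyw) isClosed_closure,
          closure_minimal (singleton_subset_iff.2 hzw) isClosed_closure⟩
      have hceq : closure (⋃₀ 𝒟) = closure D := by
        refine le_antisymm ?_ ?_
        · refine closure_minimal (sUnion_subset ?_) isClosed_closure
          rintro _ ⟨y, hy, rfl⟩
          exact closure_mono (singleton_subset_iff.2 hy)
        · exact closure_mono fun y hy => ⟨closure {y}, ⟨y, hy, rfl⟩, subset_closure rfl⟩
      obtain ⟨hdne, hddir, hdlub⟩ := xtilde_lift_lub h𝒟sub h𝒟ne h𝒟dir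
      have hxc : x ∈ closure (⋃₀ 𝒟) := by
        rw [hceq]
        exact mem_closure_iff.2 fun o ho hxo => ((hconv o ho hxo).imp fun y hy => hy.symm)
      have hcV : (⟨closure (⋃₀ 𝒟), xtilde_dsup h𝒟sub h𝒟ne h𝒟dir⟩ : Xtilde X) ∈ V := by
        refine hV.1 ?_ hxU
        show closure {x} ⊆ closure (⋃₀ 𝒟)
        exact closure_minimal (singleton_subset_iff.2 hxc) isClosed_closure
      obtain ⟨B, hBd, hBV⟩ := hV.2 _ hdne hddir _ hdlub hcV
      obtain ⟨y, hyD, hBy⟩ := hBd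
      refine ⟨y, hyD, ?_⟩
      show (⟨closure {y}, mem_xtilde_closure_singleton y⟩ : Xtilde X) ∈ V
      rwa [show (⟨closure {y}, mem_xtilde_closure_singleton y⟩ : Xtilde X) = B from
        Subtype.ext hBy]
    · -- `A ∈ ◇U`, by minimality of `X̃`
      set S : Set (Set X) := {B | B ∈ XtildeSet X ∧ ∀ h : B ∈ XtildeSet X,
        (⟨B, h⟩ : Xtilde X) ∈ V → (B ∩ U).Nonempty} with hSdef
      have hsub : XtildeSet X ⊆ S := by
        refine xtilde_min (fun B hB => xtilde_closed_nonempty hB.1) ?_ ?_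
        · intro x
          refine ⟨mem_xtilde_closure_singleton x, fun h hV' => ⟨x, subset_closure rfl, hV'⟩⟩
        · intro 𝒟 h𝒟 h𝒟ne h𝒟dir
          have h𝒟sub : 𝒟 ⊆ XtildeSet X := fun B hB => (h𝒟 hB).1
          refine ⟨xtilde_dsup h𝒟sub h𝒟ne h𝒟dir, fun h hcV => ?_⟩
          obtain ⟨hdne, hddir, hdlub⟩ := xtilde_lift_lub h𝒟sub h𝒟ne h𝒟dir
          obtain ⟨B, hBd, hBV⟩ := hV.2 _ hdne hddir _ hdlub hcV
          obtain ⟨x, hxB, hxU⟩ := (h𝒟 hBd).2 B.2 hBV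
          exact ⟨x, ((subset_sUnion_of_mem hBd).trans subset_closure) hxB, hxU⟩
      exact (hsub A.2).2 A.2 hA
    · -- `◇U ⊆ V`
      rintro B ⟨x, hxB, hxU⟩
      refine hV.1 ?_ hxU
      show closure {x} ⊆ B.1
      exact closure_minimal (singleton_subset_iff.2 hxB) (xtilde_closed_nonempty B.2).1
end

section
/- Let X_1, ..., X_n and Y be T0 spaces and f : X_1 × ⋯ × X_n → Y separately continuous. The induced map f^γ : Γ(X_1) × ⋯ × Γ(X_n) → Γ(Y) defined by f^γ(A_1, ..., A_n) = cl(f(A_1 × ⋯ × A_n)) is Scott-continuous. -/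
open Set

/-- `Γ(Z)`: nonempty closed subsets of `Z`, ordered by inclusion. -/
abbrev Gamma (Z : Type*) [TopologicalSpace Z] := {A : Set Z // IsClosed A ∧ A.Nonempty}

/-- The lifted map `f^γ(A₁,…,Aₙ) = cl (f(A₁ × ⋯ × Aₙ))`. -/
noncomputable def fgamma {ι : Type*} {X : ι → Type*} [∀ i, TopologicalSpace (X i)]
    {Y : Type*} [TopologicalSpace Y] (f : (∀ i, X i) → Y)
    (A : ∀ i, Gamma (X i)) : Gamma Y :=
  ⟨closure (f '' Set.univ.pi fun i => (A i).1), isClosed_closure,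
    ⟨f (fun i => ((A i).2.2).choose),
      subset_closure ⟨fun i => ((A i).2.2).choose, fun i _ => ((A i).2.2).choose_spec, rfl⟩⟩⟩

open Function

/-!
Suprema in `Γ(X₁) × ⋯ × Γ(Xₙ)` lie below the componentwise closures of unions, so for a directed
family `Bₖ` and a closed `C` containing every `f(Bₖ,₁ × ⋯ × Bₖ,ₙ)` it suffices to show
`f(cl ⋃ₖ Bₖ,₁ × ⋯ × cl ⋃ₖ Bₖ,ₙ) ⊆ C`. The coordinates are closed up one at a time: with the others
frozen only continuity in that coordinate is needed, and directedness merges the finitely many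
indices `k` met along the way into one.
-/

theorem Gamma.subset_closure_iUnion_of_isLUB {Z κ : Type*} [TopologicalSpace Z] [Nonempty κ]
    {F : κ → Gamma Z} {A : Gamma Z} (hA : IsLUB (range F) A) :
    A.1 ⊆ closure (⋃ k, (F k).1) :=
  @hA.2 ⟨closure (⋃ k, (F k).1), isClosed_closure,
    ((F (Classical.arbitrary κ)).2.2.mono (subset_iUnion (fun k => (F k).1) _)).closure⟩
    (forall_mem_range.2 fun k => (subset_iUnion (fun k => (F k).1) k).trans subset_closure)

section SeparatelyContinuous

variable {ι κ : Type*} [DecidableEq ι] {X : ι → Type*} [∀ i, TopologicalSpace (X i)] {Y : Type*}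
  [TopologicalSpace Y] {f : (∀ i, X i) → Y} {B : κ → ∀ i, Set (X i)} {C : Set Y}

theorem apply_mem_of_mem_closure_iUnion_on_finset
    (hf : ∀ (i : ι) (x : ∀ i, X i), Continuous fun t : X i => f (update x i t))
    (hB : Directed (· ≤ ·) B) (hC : IsClosed C) (hBC : ∀ k, f '' univ.pi (B k) ⊆ C)
    (s : Finset ι) {x : ∀ i, X i} (hxs : ∀ j ∈ s, x j ∈ closure (⋃ k, B k j))
    (hxB : ∃ k, ∀ j ∉ s, x j ∈ B k j) : f x ∈ C := by
  induction s using Finset.induction_on generalizing x with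
  | empty =>
    obtain ⟨k, hk⟩ := hxB
    exact hBC k ⟨x, fun j _ => hk j (Finset.notMem_empty j), rfl⟩
  | @insert i s hi ih =>
    obtain ⟨k, hk⟩ := hxB
    have hupdate : ∀ t ∈ ⋃ k, B k i, f (update x i t) ∈ C := by
      intro t ht
      obtain ⟨k', ht⟩ := mem_iUnion.1 ht
      obtain ⟨l, hkl, hk'l⟩ := hB k k'
      refine ih (fun j hj => ?_) ⟨l, fun j hj => ?_⟩
      · rw [update_of_ne (ne_of_mem_of_not_mem hj hi)]
        exact hxs j (Finset.mem_insert_of_mem hj)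
      · rcases eq_or_ne j i with rfl | hji
        · simpa using hk'l j ht
        · rw [update_of_ne hji]
          exact hkl j (hk j (by simp [hji, hj]))
    have := hC.closure_subset
      (map_mem_closure (hf i x) (hxs i (Finset.mem_insert_self i s)) hupdate)
    rwa [update_eq_self] at this

theorem image_pi_closure_iUnion_subset [Finite ι] [Nonempty κ]
    (hf : ∀ (i : ι) (x : ∀ i, X i), Continuous fun t : X i => f (update x i t))
    (hB : Directed (· ≤ ·) B) (hC : IsClosed C) (hBC : ∀ k, f '' univ.pi (B k) ⊆ C) :
    f '' univ.pi (fun i => closure (⋃ k, B k i)) ⊆ C := by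
  have := Fintype.ofFinite ι
  rintro _ ⟨x, hx, rfl⟩
  exact apply_mem_of_mem_closure_iUnion_on_finset hf hB hC hBC Finset.univ
    (fun j _ => hx j trivial) ⟨Classical.arbitrary κ, fun j hj => absurd (Finset.mem_univ j) hj⟩

end SeparatelyContinuous

theorem fgamma_mono {ι : Type*} {X : ι → Type*} [∀ i, TopologicalSpace (X i)] {Y : Type*}
    [TopologicalSpace Y] (f : (∀ i, X i) → Y) : Monotone (fgamma f) :=
  fun _ _ h => closure_mono (image_mono (pi_mono fun i _ => h i))

theorem stmt_12_general {ι : Type*} [Fintype ι] [DecidableEq ι] {X : ι → Type*}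
    [∀ i, TopologicalSpace (X i)]
    {Y : Type*} [TopologicalSpace Y]
    (f : (∀ i, X i) → Y)
    (hf : ∀ (i : ι) (x : ∀ i, X i), Continuous fun t : X i => f (Function.update x i t)) :
    ScottContinuous (fgamma f) := by
  intro D hD hdir A hA
  have : Nonempty D := hD.to_subtype
  have hA_sub : ∀ i, (A i).1 ⊆ closure (⋃ b : D, (b.1 i).1) := fun i =>
    Gamma.subset_closure_iUnion_of_isLUB (by simpa only [image_eq_range] using isLUB_pi.1 hA i)
  have hdir_sets : Directed (· ≤ ·) fun (b : D) i => (b.1 i).1 :=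
    (directedOn_iff_directed.1 hdir).mono_comp (· ≤ ·) fun _ _ h => h
  refine ⟨(fgamma_mono f).mem_upperBounds_image hA.1, fun C hC => closure_minimal ?_ C.2.1⟩
  have hDC : ∀ b : D, f '' univ.pi (fun i => (b.1 i).1) ⊆ C.1 := fun b =>
    subset_closure.trans (hC (mem_image_of_mem _ b.2))
  exact (image_mono (pi_mono fun i _ => hA_sub i)).trans
    (image_pi_closure_iUnion_subset hf hdir_sets C.2.1 hDC)

/-- For a separately continuous `f`, the lifted map `f^γ : Γ(X₁) × ⋯ × Γ(Xₙ) → Γ(Y)`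
is Scott continuous. -/
theorem stmt_12 {ι : Type*} [Fintype ι] [DecidableEq ι] {X : ι → Type*}
    [∀ i, TopologicalSpace (X i)] [∀ i, T0Space (X i)]
    {Y : Type*} [TopologicalSpace Y] [T0Space Y]
    (f : (∀ i, X i) → Y)
    (hf : ∀ (i : ι) (x : ∀ i, X i), Continuous fun t : X i => f (Function.update x i t)) :
    ScottContinuous (fgamma f) :=
  stmt_12_general f hf
end

section
/- A directed space X is a continuous space (respectively, an algebraic space) if and only if the dcpo X̃ underlying its D-completion is a continuous (respectively, algebraic) dcpo. -/
open Set

variable {X : Type*} [TopologicalSpace X]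

/-- The way-below relation on a directed space: `x ≪ y` iff every directed set
converging to `y` meets `↑x` (taken with respect to the specialization order). -/
def sWayBelow (x y : X) : Prop :=
  ∀ D : Set X, D.Nonempty → DirectedOn specLe D → DConv D y →
    (D ∩ {z | specLe x z}).Nonempty

/-- `X` is a continuous space: for each `x`, `⇓x` is directed and converges to `x`. -/
def ContinuousSp (X : Type*) [TopologicalSpace X] : Prop :=
  ∀ x : X, {a : X | sWayBelow a x}.Nonempty ∧
    DirectedOn specLe {a : X | sWayBelow a x} ∧ DConv {a : X | sWayBelow a x} x

/-- `X` is an algebraic space: for each `x`, the set of compact elements below `x`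
is directed and converges to `x`. -/
def AlgebraicSp (X : Type*) [TopologicalSpace X] : Prop :=
  ∀ x : X, {a : X | sWayBelow a a ∧ specLe a x}.Nonempty ∧
    DirectedOn specLe {a : X | sWayBelow a a ∧ specLe a x} ∧
    DConv {a : X | sWayBelow a a ∧ specLe a x} x

/-- The way-below relation on the dcpo `X̃`. -/
def dWayBelow (a b : Xtilde X) : Prop :=
  ∀ d : Set (Xtilde X), d.Nonempty → DirectedOn (· ≤ ·) d →
    ∀ s : Xtilde X, IsLUB d s → b ≤ s → ∃ c ∈ d, a ≤ c

/-- `X̃` is a continuous dcpo. -/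
def ContinuousD (X : Type*) [TopologicalSpace X] : Prop :=
  ∀ b : Xtilde X, {a | dWayBelow a b}.Nonempty ∧
    DirectedOn (· ≤ ·) {a | dWayBelow a b} ∧ IsLUB {a | dWayBelow a b} b

/-- `X̃` is an algebraic dcpo. -/
def AlgebraicD (X : Type*) [TopologicalSpace X] : Prop :=
  ∀ b : Xtilde X, {a | dWayBelow a a ∧ a ≤ b}.Nonempty ∧
    DirectedOn (· ≤ ·) {a | dWayBelow a a ∧ a ≤ b} ∧
    IsLUB {a | dWayBelow a a ∧ a ≤ b} b

namespace Stmt16Aux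

variable {X : Type*} [TopologicalSpace X]

lemma specLe_refl (x : X) : specLe x x := subset_closure rfl

lemma specLe_iff {x y : X} : specLe x y ↔ closure ({x} : Set X) ⊆ closure {y} :=
  ⟨fun h => closure_minimal (singleton_subset_iff.2 h) isClosed_closure,
   fun h => h (subset_closure rfl)⟩

lemma specLe_trans {x y z : X} (h1 : specLe x y) (h2 : specLe y z) : specLe x z := by
  rw [specLe_iff] at h1 h2 ⊢; exact h1.trans h2

lemma dconv_iff {D : Set X} {x : X} : DConv D x ↔ x ∈ closure D := by
  rw [mem_closure_iff]
  exact ⟨fun h U hU hx => by simpa [Set.inter_comm] using h U hU hx,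
         fun h U hU hx => by simpa [Set.inter_comm] using h U hU hx⟩

lemma specLe_mem_closed {x y : X} (h : specLe x y) {A : Set X} (hA : IsClosed A)
    (hy : y ∈ A) : x ∈ A :=
  closure_minimal (singleton_subset_iff.2 hy) hA h

/-! basic sWayBelow lemmas -/

lemma sWayBelow_specLe {x y : X} (h : sWayBelow x y) : specLe x y := by
  obtain ⟨z, hz, hxz⟩ := h {y} ⟨y, rfl⟩
    (fun a ha b hb => ⟨y, rfl, by rw [ha]; exact specLe_refl y, by rw [hb]; exact specLe_refl y⟩)
    (dconv_iff.2 (subset_closure rfl))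
  rw [hz] at hxz
  exact hxz

lemma sWayBelow_of_specLe_left {x x' y : X} (h : specLe x x') (h' : sWayBelow x' y) :
    sWayBelow x y := by
  intro D hne hdir hconv
  obtain ⟨z, hz, hxz⟩ := h' D hne hdir hconv
  exact ⟨z, hz, specLe_trans h hxz⟩

lemma sWayBelow_of_specLe_right {x y z : X} (h : sWayBelow x y) (h' : specLe y z) :
    sWayBelow x z := by
  intro D hne hdir hconv
  refine h D hne hdir (dconv_iff.2 ?_)
  exact specLe_mem_closed h' isClosed_closure (dconv_iff.1 hconv)

/-! XtildeSet lemmas -/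

lemma xtilde_closed_nonempty {A : Set X} (hA : A ∈ XtildeSet X) :
    IsClosed A ∧ A.Nonempty := by
  refine hA {A : Set X | IsClosed A ∧ A.Nonempty}
    ⟨Set.Subset.rfl, fun x => ⟨isClosed_closure, ⟨x, subset_closure rfl⟩⟩,
     fun 𝒟 h𝒟 hne hdir => ⟨isClosed_closure, ?_⟩⟩
  obtain ⟨A0, hA0⟩ := hne
  obtain ⟨a, ha⟩ := (h𝒟 hA0).2
  exact ⟨a, subset_closure ⟨A0, hA0, ha⟩⟩

lemma xtilde_preirr {A : Set X} (hA : A ∈ XtildeSet X) : IsPreirreducible A := by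
  refine (hA {A : Set X | (IsClosed A ∧ A.Nonempty) ∧ IsPreirreducible A}
    ⟨fun B hB => hB.1, fun x => ⟨⟨isClosed_closure, ⟨x, subset_closure rfl⟩⟩,
      (isIrreducible_singleton.closure).2⟩, ?_⟩).2
  intro 𝒟 h𝒟 hne hdir
  refine ⟨⟨isClosed_closure, ?_⟩, ?_⟩
  · obtain ⟨A0, hA0⟩ := hne
    obtain ⟨a, ha⟩ := (h𝒟 hA0).1.2
    exact ⟨a, subset_closure ⟨A0, hA0, ha⟩⟩
  · intro u v hu hv h1 h2
    have m1 : (⋃₀ 𝒟 ∩ u).Nonempty := by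
      obtain ⟨z, hz, hzu⟩ := h1
      have := mem_closure_iff.1 hz u hu hzu
      exact ⟨this.choose, this.choose_spec.2, this.choose_spec.1⟩
    have m2 : (⋃₀ 𝒟 ∩ v).Nonempty := by
      obtain ⟨z, hz, hzv⟩ := h2
      have := mem_closure_iff.1 hz v hv hzv
      exact ⟨this.choose, this.choose_spec.2, this.choose_spec.1⟩
    obtain ⟨z1, ⟨A1, hA1, hz1⟩, hz1u⟩ := m1
    obtain ⟨z2, ⟨A2, hA2, hz2⟩, hz2v⟩ := m2
    obtain ⟨A3, hA3, h13, h23⟩ := hdir A1 hA1 A2 hA2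
    obtain ⟨z, hz3, hzuv⟩ := (h𝒟 hA3).2 u v hu hv ⟨z1, h13 hz1, hz1u⟩ ⟨z2, h23 hz2, hz2v⟩
    exact ⟨z, subset_closure ⟨A3, hA3, hz3⟩, hzuv⟩

lemma point_mem (x : X) : closure ({x} : Set X) ∈ XtildeSet X :=
  fun _ hS => hS.2.1 x

lemma sup_mem {𝒟 : Set (Set X)} (h : 𝒟 ⊆ XtildeSet X) (hne : 𝒟.Nonempty)
    (hdir : DirectedOn (· ⊆ ·) 𝒟) : closure (⋃₀ 𝒟) ∈ XtildeSet X :=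
  fun S hS => hS.2.2 𝒟 (fun A hA => h hA S hS) hne hdir

end Stmt16Aux
namespace Stmt16Aux

variable {X : Type*} [TopologicalSpace X]

lemma xt_le_iff {a b : Xtilde X} : a ≤ b ↔ a.val ⊆ b.val := Iff.rfl

/-- the canonical map into the completion -/
def eta (x : X) : Xtilde X := ⟨closure {x}, point_mem x⟩

lemma eta_le_eta {x y : X} (h : specLe x y) : eta x ≤ eta y := specLe_iff.1 h

lemma eta_le {x : X} {a : Xtilde X} (h : x ∈ a.val) : eta x ≤ a :=
  closure_minimal (singleton_subset_iff.2 h) (xtilde_closed_nonempty a.2).1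

lemma mem_self_eta (x : X) : x ∈ (eta x).val := subset_closure rfl

/-- concrete supremum of a nonempty directed family in `Xtilde` -/
def dsup (d : Set (Xtilde X)) (hne : d.Nonempty) (hdir : DirectedOn (· ≤ ·) d) :
    Xtilde X :=
  ⟨closure (⋃₀ (Subtype.val '' d)),
   sup_mem (by rintro A ⟨a, _, rfl⟩; exact a.2) (hne.image _)
     (by rintro _ ⟨a, ha, rfl⟩ _ ⟨b, hb, rfl⟩
         obtain ⟨c, hc, hac, hbc⟩ := hdir a ha b hb
         exact ⟨c.val, Set.mem_image_of_mem _ hc, hac, hbc⟩)⟩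

lemma isLUB_dsup (d : Set (Xtilde X)) (hne : d.Nonempty) (hdir : DirectedOn (· ≤ ·) d) :
    IsLUB d (dsup d hne hdir) := by
  constructor
  · intro a ha
    exact (Set.subset_sUnion_of_mem (Set.mem_image_of_mem _ ha)).trans subset_closure
  · intro u hu
    refine closure_minimal (Set.sUnion_subset ?_) (xtilde_closed_nonempty u.2).1
    rintro _ ⟨a, ha, rfl⟩
    exact hu ha

lemma lub_eq_dsup {d : Set (Xtilde X)} (hne : d.Nonempty) (hdir : DirectedOn (· ≤ ·) d)
    {s : Xtilde X} (hs : IsLUB d s) : s = dsup d hne hdir :=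
  hs.unique (isLUB_dsup d hne hdir)

/-! basic dWayBelow lemmas -/

lemma dWayBelow.le {a b : Xtilde X} (h : dWayBelow a b) : a ≤ b := by
  obtain ⟨c, hc, hac⟩ := h {b} ⟨b, rfl⟩
    (fun u hu v hv => ⟨b, rfl, by rw [hu], by rw [hv]⟩) b isLUB_singleton le_rfl
  rw [hc] at hac
  exact hac

lemma dWayBelow_of_le_left {a a' b : Xtilde X} (h : a ≤ a') (h' : dWayBelow a' b) :
    dWayBelow a b := by
  intro d hne hdir s hs hbs
  obtain ⟨c, hc, hac⟩ := h' d hne hdir s hs hbs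
  exact ⟨c, hc, h.trans hac⟩

lemma dWayBelow_of_le_right {a b b' : Xtilde X} (h : dWayBelow a b) (h' : b ≤ b') :
    dWayBelow a b' := by
  intro d hne hdir s hs hbs
  exact h d hne hdir s hs (h'.trans hbs)

end Stmt16Aux
namespace Stmt16Aux

variable {X : Type*} [TopologicalSpace X]

lemma closure_mem_xtilde {D : Set X} (hne : D.Nonempty) (hdir : DirectedOn specLe D) :
    closure D ∈ XtildeSet X := by
  have key : closure (⋃₀ ((fun x => closure ({x} : Set X)) '' D)) = closure D := by
    apply subset_antisymm
    · refine closure_minimal (Set.sUnion_subset ?_) isClosed_closure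
      rintro _ ⟨x, hx, rfl⟩
      exact closure_minimal (singleton_subset_iff.2 (subset_closure hx)) isClosed_closure
    · refine closure_mono fun x hx => ?_
      exact ⟨closure {x}, ⟨x, hx, rfl⟩, subset_closure rfl⟩
  rw [← key]
  refine sup_mem ?_ (hne.image _) ?_
  · rintro _ ⟨x, _, rfl⟩; exact point_mem x
  · rintro _ ⟨x, hx, rfl⟩ _ ⟨y, hy, rfl⟩
    obtain ⟨z, hz, hxz, hyz⟩ := hdir x hx y hy
    exact ⟨closure {z}, ⟨z, hz, rfl⟩, specLe_iff.1 hxz, specLe_iff.1 hyz⟩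

lemma isLUB_eta_image {D : Set X} (hne : D.Nonempty) (hdir : DirectedOn specLe D) :
    IsLUB (eta '' D) (⟨closure D, closure_mem_xtilde hne hdir⟩ : Xtilde X) := by
  constructor
  · rintro _ ⟨x, hx, rfl⟩
    exact closure_minimal (singleton_subset_iff.2 (subset_closure hx)) isClosed_closure
  · intro u hu
    refine closure_minimal (fun x hx => ?_) (xtilde_closed_nonempty u.2).1
    exact hu (Set.mem_image_of_mem _ hx) (mem_self_eta x)

/-- transfer: if `A ≪ η y` in `X̃` then every point of `A` is way below `y` in `X`. -/
lemma sWayBelow_of_dWayBelow {A : Xtilde X} {y : X} (h : dWayBelow A (eta y))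
    {z : X} (hz : z ∈ A.val) : sWayBelow z y := by
  intro D hne hdir hconv
  have hlub := isLUB_eta_image hne hdir
  have hds : DirectedOn (· ≤ ·) (eta '' D) := by
    rintro _ ⟨x, hx, rfl⟩ _ ⟨w, hw, rfl⟩
    obtain ⟨v, hv, h1, h2⟩ := hdir x hx w hw
    exact ⟨eta v, Set.mem_image_of_mem _ hv, eta_le_eta h1, eta_le_eta h2⟩
  have hys : eta y ≤ ⟨closure D, closure_mem_xtilde hne hdir⟩ :=
    closure_minimal (singleton_subset_iff.2 (dconv_iff.1 hconv)) isClosed_closure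
  obtain ⟨c, hc, hAc⟩ := h (eta '' D) (hne.image _) hds _ hlub hys
  obtain ⟨e, he, rfl⟩ := hc
  exact ⟨e, he, hAc hz⟩

end Stmt16Aux
namespace Stmt16Aux

variable {X : Type*} [TopologicalSpace X]

lemma upOpen (hX : ∀ U : Set X, DirOpen U → IsOpen U) {k : X} (hk : sWayBelow k k) :
    IsOpen {z : X | specLe k z} := by
  refine hX _ fun D x hne hdir hconv hx => ?_
  refine hk D hne hdir (dconv_iff.2 ?_)
  exact specLe_mem_closed hx isClosed_closure (dconv_iff.1 hconv)

lemma wayOpen (hX : ∀ U : Set X, DirOpen U → IsOpen U) (hc : ContinuousSp X) (x : X) :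
    IsOpen {z : X | sWayBelow x z} := by
  refine hX _ fun D y hne hdir hconv hxy => ?_
  set E : Set X := {w : X | ∃ d ∈ D, sWayBelow w d} with hE
  have hEne : E.Nonempty := by
    obtain ⟨d, hd⟩ := hne
    obtain ⟨w, hw⟩ := (hc d).1
    exact ⟨w, d, hd, hw⟩
  have hEdir : DirectedOn specLe E := by
    rintro w1 ⟨d1, hd1, hw1⟩ w2 ⟨d2, hd2, hw2⟩
    obtain ⟨d3, hd3, h13, h23⟩ := hdir d1 hd1 d2 hd2
    have hw1' : sWayBelow w1 d3 := sWayBelow_of_specLe_right hw1 h13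
    have hw2' : sWayBelow w2 d3 := sWayBelow_of_specLe_right hw2 h23
    obtain ⟨w3, hw3, g1, g2⟩ := (hc d3).2.1 w1 hw1' w2 hw2'
    exact ⟨w3, ⟨d3, hd3, hw3⟩, g1, g2⟩
  have hDE : D ⊆ closure E := by
    intro d hd
    have : d ∈ closure {a : X | sWayBelow a d} := dconv_iff.1 (hc d).2.2
    have hsub : {a : X | sWayBelow a d} ⊆ E := fun a ha => ⟨d, hd, ha⟩
    exact closure_mono hsub this
  have hEconv : DConv E y := by
    rw [dconv_iff]
    exact closure_minimal hDE isClosed_closure (dconv_iff.1 hconv)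
  obtain ⟨w, hwE, hxw⟩ := hxy E hEne hEdir hEconv
  obtain ⟨d, hd, hwd⟩ := hwE
  exact ⟨d, hd, sWayBelow_of_specLe_left hxw hwd⟩

lemma eta_dwb_of_open {x : X} {U : Set X} (hU : IsOpen U)
    (hsub : ∀ z ∈ U, specLe x z) {b : Xtilde X} (hb : (b.val ∩ U).Nonempty) :
    dWayBelow (eta x) b := by
  intro d hne hdir s hs hbs
  have hseq : s = dsup d hne hdir := lub_eq_dsup hne hdir hs
  obtain ⟨y, hyb, hyU⟩ := hb
  have hy : y ∈ closure (⋃₀ (Subtype.val '' d)) := by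
    have := hbs hyb
    rwa [hseq] at this
  obtain ⟨z, hzU, hz⟩ := mem_closure_iff.1 hy U hU hyU
  obtain ⟨_, ⟨c, hc, rfl⟩, hzc⟩ := hz
  refine ⟨c, hc, ?_⟩
  exact (eta_le_eta (hsub z hzU)).trans (eta_le hzc)

end Stmt16Aux
namespace Stmt16Aux

variable {X : Type*} [TopologicalSpace X]

lemma lubdir {b : Xtilde X} {W' T : Set (Xtilde X)} (hne : W'.Nonempty)
    (hdir : DirectedOn (· ≤ ·) W') (hlub : IsLUB W' b) (hsub : W' ⊆ T)
    (hle : ∀ a ∈ T, a ≤ b) (hTd : ∀ a ∈ T, ∃ c ∈ W', a ≤ c) :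
    T.Nonempty ∧ DirectedOn (· ≤ ·) T ∧ IsLUB T b := by
  refine ⟨hne.mono hsub, ?_, ⟨fun a ha => hle a ha, fun u hu => hlub.2 fun c hc => hu (hsub hc)⟩⟩
  intro a1 h1 a2 h2
  obtain ⟨c1, hc1, g1⟩ := hTd a1 h1
  obtain ⟨c2, hc2, g2⟩ := hTd a2 h2
  obtain ⟨c3, hc3, e1, e2⟩ := hdir c1 hc1 c2 hc2
  exact ⟨c3, hsub hc3, g1.trans e1, g2.trans e2⟩

theorem contSp_to_contD (hX : ∀ U : Set X, DirOpen U → IsOpen U)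
    (hc : ContinuousSp X) : ContinuousD X := by
  intro b
  obtain ⟨hbA, hbne⟩ := xtilde_closed_nonempty b.2
  set E : Set X := {x : X | ∃ y ∈ b.val, sWayBelow x y} with hEdef
  have hEA : E ⊆ b.val := by
    rintro x ⟨y, hy, hxy⟩
    exact specLe_mem_closed (sWayBelow_specLe hxy) hbA hy
  have hAE : b.val ⊆ closure E := by
    intro y hy
    have hsub : {a : X | sWayBelow a y} ⊆ E := fun a ha => ⟨y, hy, ha⟩
    exact closure_mono hsub (dconv_iff.1 (hc y).2.2)
  set W' : Set (Xtilde X) := eta '' E with hW'def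
  have hW'wb : ∀ a ∈ W', dWayBelow a b := by
    rintro _ ⟨x, ⟨y, hyA, hxy⟩, rfl⟩
    exact eta_dwb_of_open (wayOpen hX hc x) (fun z hz => sWayBelow_specLe hz) ⟨y, hyA, hxy⟩
  have hW'ne : W'.Nonempty := by
    obtain ⟨y, hy⟩ := hbne
    obtain ⟨x, hx⟩ := (hc y).1
    exact ⟨eta x, ⟨x, ⟨y, hy, hx⟩, rfl⟩⟩
  have hW'dir : DirectedOn (· ≤ ·) W' := by
    rintro _ ⟨x1, ⟨y1, hy1, h1⟩, rfl⟩ _ ⟨x2, ⟨y2, hy2, h2⟩, rfl⟩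
    obtain ⟨y, hyA, hy1', hy2'⟩ := xtilde_preirr b.2 _ _ (wayOpen hX hc x1)
      (wayOpen hX hc x2) ⟨y1, hy1, h1⟩ ⟨y2, hy2, h2⟩
    obtain ⟨z, hz, g1, g2⟩ := (hc y).2.1 x1 hy1' x2 hy2'
    exact ⟨eta z, ⟨z, ⟨y, hyA, hz⟩, rfl⟩, eta_le_eta g1, eta_le_eta g2⟩
  have hlub : IsLUB W' b := by
    constructor
    · rintro _ ⟨x, hx, rfl⟩
      exact eta_le (hEA hx)
    · intro u hu
      have hEu : E ⊆ u.val := fun x hx => hu ⟨x, hx, rfl⟩ (mem_self_eta x)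
      exact hAE.trans (closure_minimal hEu (xtilde_closed_nonempty u.2).1)
  exact lubdir hW'ne hW'dir hlub hW'wb (fun a ha => dWayBelow.le ha)
    (fun a ha => ha W' hW'ne hW'dir b hlub le_rfl)

end Stmt16Aux
namespace Stmt16Aux

variable {X : Type*} [TopologicalSpace X]

theorem algSp_to_algD (hX : ∀ U : Set X, DirOpen U → IsOpen U)
    (ha : AlgebraicSp X) : AlgebraicD X := by
  intro b
  obtain ⟨hbA, hbne⟩ := xtilde_closed_nonempty b.2
  set E : Set X := {x : X | sWayBelow x x ∧ x ∈ b.val} with hEdef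
  have hAE : b.val ⊆ closure E := by
    intro y hy
    have hsub : {a : X | sWayBelow a a ∧ specLe a y} ⊆ E := fun a haa =>
      ⟨haa.1, specLe_mem_closed haa.2 hbA hy⟩
    exact closure_mono hsub (dconv_iff.1 (ha y).2.2)
  set W' : Set (Xtilde X) := eta '' E with hW'def
  have hW'wb : ∀ a ∈ W', dWayBelow a a ∧ a ≤ b := by
    rintro _ ⟨x, ⟨hxx, hxA⟩, rfl⟩
    refine ⟨eta_dwb_of_open (upOpen hX hxx) (fun z hz => hz) ?_, eta_le hxA⟩
    exact ⟨x, mem_self_eta x, specLe_refl x⟩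
  have hW'ne : W'.Nonempty := by
    obtain ⟨y, hy⟩ := hbne
    obtain ⟨x, hx1, hx2⟩ := (ha y).1
    exact ⟨eta x, ⟨x, ⟨hx1, specLe_mem_closed hx2 hbA hy⟩, rfl⟩⟩
  have hW'dir : DirectedOn (· ≤ ·) W' := by
    rintro _ ⟨x1, ⟨h1, hx1A⟩, rfl⟩ _ ⟨x2, ⟨h2, hx2A⟩, rfl⟩
    obtain ⟨y, hyA, hy1', hy2'⟩ := xtilde_preirr b.2 _ _ (upOpen hX h1)
      (upOpen hX h2) ⟨x1, hx1A, specLe_refl x1⟩ ⟨x2, hx2A, specLe_refl x2⟩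
    obtain ⟨z, hz, g1, g2⟩ := (ha y).2.1 x1 ⟨h1, hy1'⟩ x2 ⟨h2, hy2'⟩
    exact ⟨eta z, ⟨z, ⟨hz.1, specLe_mem_closed hz.2 hbA hyA⟩, rfl⟩,
      eta_le_eta g1, eta_le_eta g2⟩
  have hlub : IsLUB W' b := by
    constructor
    · rintro _ ⟨x, hx, rfl⟩
      exact eta_le hx.2
    · intro u hu
      have hEu : E ⊆ u.val := fun x hx => hu ⟨x, hx, rfl⟩ (mem_self_eta x)
      exact hAE.trans (closure_minimal hEu (xtilde_closed_nonempty u.2).1)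
  exact lubdir hW'ne hW'dir hlub hW'wb (fun a haa => haa.2)
    (fun a haa => haa.1 W' hW'ne hW'dir b hlub haa.2)

end Stmt16Aux
namespace Stmt16Aux

variable {X : Type*} [TopologicalSpace X]

lemma interp (hc : ContinuousD X) {a b : Xtilde X} (h : dWayBelow a b) :
    ∃ c, dWayBelow a c ∧ dWayBelow c b := by
  set d : Set (Xtilde X) := {c | ∃ e, dWayBelow c e ∧ dWayBelow e b} with hd
  have hdne : d.Nonempty := by
    obtain ⟨e, he⟩ := (hc b).1
    obtain ⟨c, hce⟩ := (hc e).1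
    exact ⟨c, e, hce, he⟩
  have hddir : DirectedOn (· ≤ ·) d := by
    rintro c1 ⟨e1, hc1, he1⟩ c2 ⟨e2, hc2, he2⟩
    obtain ⟨e3, he3, f1, f2⟩ := (hc b).2.1 e1 he1 e2 he2
    obtain ⟨c3, hc3, g1, g2⟩ := (hc e3).2.1 c1 (dWayBelow_of_le_right hc1 f1)
      c2 (dWayBelow_of_le_right hc2 f2)
    exact ⟨c3, ⟨e3, hc3, he3⟩, g1, g2⟩
  have hlubd : IsLUB d b := by
    constructor
    · rintro c ⟨e, hce, heb⟩
      exact (dWayBelow.le hce).trans (dWayBelow.le heb)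
    · intro u hu
      refine (hc b).2.2.2 fun e he => ?_
      exact (hc e).2.2.2 fun c hce => hu ⟨e, hce, he⟩
  obtain ⟨c, ⟨e, hce, heb⟩, hac⟩ := h d hdne hddir b hlubd le_rfl
  exact ⟨e, dWayBelow_of_le_left hac hce, heb⟩

lemma dwb_point (hc : ContinuousD X) {a b : Xtilde X} (h : dWayBelow a b) :
    ∃ x : X, a.val ⊆ closure {x} ∧ closure {x} ⊆ b.val := by
  set S : Set (Set X) := {B | ∃ (hB : B ∈ XtildeSet X), ∀ a : Xtilde X,
      dWayBelow a ⟨B, hB⟩ → ∃ x : X, a.val ⊆ closure {x} ∧ closure {x} ⊆ B} with hSdef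
  have hbS : b.val ∈ S := by
    refine b.2 S ⟨fun B hB => xtilde_closed_nonempty hB.choose, ?_, ?_⟩
    · intro x
      exact ⟨point_mem x, fun a ha => ⟨x, dWayBelow.le ha, Set.Subset.rfl⟩⟩
    · intro 𝒟 h𝒟 hne hdir
      have hmem : ∀ A ∈ 𝒟, A ∈ XtildeSet X := fun A hA => (h𝒟 hA).choose
      refine ⟨sup_mem hmem hne hdir, ?_⟩
      intro a ha
      obtain ⟨c, hac, hcb⟩ := interp hc ha
      set d : Set (Xtilde X) := {p : Xtilde X | p.val ∈ 𝒟} with hddef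
      have hdne : d.Nonempty := by
        obtain ⟨A, hA⟩ := hne
        exact ⟨⟨A, hmem A hA⟩, hA⟩
      have hddir : DirectedOn (· ≤ ·) d := by
        intro p hp q hq
        obtain ⟨C, hC, h1, h2⟩ := hdir p.val hp q.val hq
        exact ⟨⟨C, hmem C hC⟩, hC, h1, h2⟩
      have hlubd : IsLUB d (⟨closure (⋃₀ 𝒟), sup_mem hmem hne hdir⟩ : Xtilde X) := by
        constructor
        · intro p hp
          exact (Set.subset_sUnion_of_mem hp).trans subset_closure
        · intro u hu
          refine closure_minimal (Set.sUnion_subset fun A hA => ?_)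
            (xtilde_closed_nonempty u.2).1
          exact hu (show (⟨A, hmem A hA⟩ : Xtilde X) ∈ d from hA)
      obtain ⟨p, hp, hcp⟩ := hcb d hdne hddir _ hlubd le_rfl
      obtain ⟨hpX, hpP⟩ := h𝒟 hp
      obtain ⟨x, hx1, hx2⟩ := hpP a (dWayBelow_of_le_right hac hcp)
      exact ⟨x, hx1, hx2.trans ((Set.subset_sUnion_of_mem hp).trans subset_closure)⟩
  obtain ⟨hB, hP⟩ := hbS
  exact hP a h

theorem contD_to_contSp (hc : ContinuousD X) : ContinuousSp X := by
  intro y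
  obtain ⟨hWne, hWdir, hWlub⟩ := hc (eta y)
  set W := {a : Xtilde X | dWayBelow a (eta y)} with hWdef
  set P : Set X := {x | dWayBelow (eta x) (eta y)} with hPdef
  have hWP : ∀ A ∈ W, ∃ x ∈ P, A.val ⊆ closure {x} := by
    intro A hA
    obtain ⟨C, hAC, hCy⟩ := interp hc hA
    obtain ⟨x, hx1, hx2⟩ := dwb_point hc hAC
    exact ⟨x, dWayBelow_of_le_left (show eta x ≤ C from hx2) hCy, hx1⟩
  have hPsub : P ⊆ {a : X | sWayBelow a y} := fun x hx =>
    sWayBelow_of_dWayBelow hx (mem_self_eta x)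
  have hPdir : DirectedOn specLe P := by
    intro x1 h1 x2 h2
    obtain ⟨A3, hA3, e1, e2⟩ := hWdir (eta x1) h1 (eta x2) h2
    obtain ⟨x3, hx3, hsub⟩ := hWP A3 hA3
    exact ⟨x3, hx3, hsub (e1 (mem_self_eta x1)), hsub (e2 (mem_self_eta x2))⟩
  have hyP : y ∈ closure P := by
    have heq : eta y = dsup W hWne hWdir := lub_eq_dsup hWne hWdir hWlub
    have h1 : ⋃₀ (Subtype.val '' W) ⊆ closure P := by
      rintro z ⟨_, ⟨A, hA, rfl⟩, hz⟩
      obtain ⟨x, hxP, hsub⟩ := hWP A hA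
      exact closure_mono (singleton_subset_iff.2 hxP) (hsub hz)
    have h2 : (eta y).val ⊆ closure P := by
      rw [heq]
      exact closure_minimal h1 isClosed_closure
    exact h2 (mem_self_eta y)
  have hPne : P.Nonempty := by
    obtain ⟨A, hA⟩ := hWne
    obtain ⟨x, hx, _⟩ := hWP A hA
    exact ⟨x, hx⟩
  refine ⟨?_, ?_, ?_⟩
  · obtain ⟨x, hx⟩ := hPne
    exact ⟨x, hPsub hx⟩
  · intro z1 h1 z2 h2
    obtain ⟨p1, hp1, g1⟩ := h1 P hPne hPdir (dconv_iff.2 hyP)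
    obtain ⟨p2, hp2, g2⟩ := h2 P hPne hPdir (dconv_iff.2 hyP)
    obtain ⟨p3, hp3, f1, f2⟩ := hPdir p1 hp1 p2 hp2
    exact ⟨p3, hPsub hp3, specLe_trans g1 f1, specLe_trans g2 f2⟩
  · exact dconv_iff.2 (closure_mono hPsub hyP)

end Stmt16Aux
namespace Stmt16Aux

variable {X : Type*} [TopologicalSpace X]

lemma cpt_point {a b : Xtilde X} (h : dWayBelow a a) (hab : a ≤ b) :
    ∃ x : X, a.val ⊆ closure {x} ∧ closure {x} ⊆ b.val := by
  set S : Set (Set X) := {B | ∃ (hB : B ∈ XtildeSet X), ∀ a : Xtilde X,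
      dWayBelow a a → a.val ⊆ B → ∃ x : X, a.val ⊆ closure {x} ∧ closure {x} ⊆ B} with hSdef
  have hbS : b.val ∈ S := by
    refine b.2 S ⟨fun B hB => xtilde_closed_nonempty hB.choose, ?_, ?_⟩
    · intro x
      exact ⟨point_mem x, fun a _ hsub => ⟨x, hsub, Set.Subset.rfl⟩⟩
    · intro 𝒟 h𝒟 hne hdir
      have hmem : ∀ A ∈ 𝒟, A ∈ XtildeSet X := fun A hA => (h𝒟 hA).choose
      refine ⟨sup_mem hmem hne hdir, ?_⟩
      intro a ha hsub
      set d : Set (Xtilde X) := {p : Xtilde X | p.val ∈ 𝒟} with hddef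
      have hdne : d.Nonempty := by
        obtain ⟨A, hA⟩ := hne
        exact ⟨⟨A, hmem A hA⟩, hA⟩
      have hddir : DirectedOn (· ≤ ·) d := by
        intro p hp q hq
        obtain ⟨C, hC, h1, h2⟩ := hdir p.val hp q.val hq
        exact ⟨⟨C, hmem C hC⟩, hC, h1, h2⟩
      have hlubd : IsLUB d (⟨closure (⋃₀ 𝒟), sup_mem hmem hne hdir⟩ : Xtilde X) := by
        constructor
        · intro p hp
          exact (Set.subset_sUnion_of_mem hp).trans subset_closure
        · intro u hu
          refine closure_minimal (Set.sUnion_subset fun A hA => ?_)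
            (xtilde_closed_nonempty u.2).1
          exact hu (show (⟨A, hmem A hA⟩ : Xtilde X) ∈ d from hA)
      obtain ⟨p, hp, hap⟩ := ha d hdne hddir _ hlubd hsub
      obtain ⟨hpX, hpP⟩ := h𝒟 hp
      obtain ⟨x, hx1, hx2⟩ := hpP a ha hap
      exact ⟨x, hx1, hx2.trans ((Set.subset_sUnion_of_mem hp).trans subset_closure)⟩
  obtain ⟨hB, hP⟩ := hbS
  exact hP a h hab

theorem algD_to_algSp (ha : AlgebraicD X) : AlgebraicSp X := by
  intro y
  obtain ⟨hWne, hWdir, hWlub⟩ := ha (eta y)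
  set W := {a : Xtilde X | dWayBelow a a ∧ a ≤ eta y} with hWdef
  set P : Set X := {x | dWayBelow (eta x) (eta x) ∧ specLe x y} with hPdef
  have hWP : ∀ A ∈ W, ∃ x ∈ P, A.val ⊆ closure {x} := by
    intro A hA
    obtain ⟨x, hx1, hx2⟩ := cpt_point hA.1 (le_refl A)
    have hAx : A = eta x := Subtype.ext (subset_antisymm hx1 hx2)
    refine ⟨x, ⟨?_, ?_⟩, hx1⟩
    · rw [← hAx]; exact hA.1
    · exact hA.2 (hx2 (mem_self_eta x))
  have hPsub : P ⊆ {a : X | sWayBelow a a ∧ specLe a y} := fun x hx =>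
    ⟨sWayBelow_of_dWayBelow hx.1 (mem_self_eta x), hx.2⟩
  have hPdir : DirectedOn specLe P := by
    intro x1 h1 x2 h2
    obtain ⟨A3, hA3, e1, e2⟩ := hWdir (eta x1) ⟨h1.1, eta_le_eta h1.2⟩
      (eta x2) ⟨h2.1, eta_le_eta h2.2⟩
    obtain ⟨x3, hx3, hsub⟩ := hWP A3 hA3
    exact ⟨x3, hx3, hsub (e1 (mem_self_eta x1)), hsub (e2 (mem_self_eta x2))⟩
  have hyP : y ∈ closure P := by
    have heq : eta y = dsup W hWne hWdir := lub_eq_dsup hWne hWdir hWlub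
    have h1 : ⋃₀ (Subtype.val '' W) ⊆ closure P := by
      rintro z ⟨_, ⟨A, hA, rfl⟩, hz⟩
      obtain ⟨x, hxP, hsub⟩ := hWP A hA
      exact closure_mono (singleton_subset_iff.2 hxP) (hsub hz)
    have h2 : (eta y).val ⊆ closure P := by
      rw [heq]
      exact closure_minimal h1 isClosed_closure
    exact h2 (mem_self_eta y)
  have hPne : P.Nonempty := by
    obtain ⟨A, hA⟩ := hWne
    obtain ⟨x, hx, _⟩ := hWP A hA
    exact ⟨x, hx⟩
  refine ⟨?_, ?_, ?_⟩
  · obtain ⟨x, hx⟩ := hPne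
    exact ⟨x, hPsub hx⟩
  · intro z1 h1 z2 h2
    have c1 : DConv P z1 := dconv_iff.2 (specLe_mem_closed h1.2 isClosed_closure hyP)
    have c2 : DConv P z2 := dconv_iff.2 (specLe_mem_closed h2.2 isClosed_closure hyP)
    obtain ⟨p1, hp1, g1⟩ := h1.1 P hPne hPdir c1
    obtain ⟨p2, hp2, g2⟩ := h2.1 P hPne hPdir c2
    obtain ⟨p3, hp3, f1, f2⟩ := hPdir p1 hp1 p2 hp2
    exact ⟨p3, hPsub hp3, specLe_trans g1 f1, specLe_trans g2 f2⟩
  · exact dconv_iff.2 (closure_mono hPsub hyP)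

end Stmt16Aux

/-- A directed space `X` is continuous (resp. algebraic) iff the dcpo `X̃` underlying its
D-completion is a continuous (resp. algebraic) dcpo. -/
theorem stmt_16 [T0Space X] (hX : ∀ U : Set X, DirOpen U → IsOpen U) :
    (ContinuousSp X ↔ ContinuousD X) ∧ (AlgebraicSp X ↔ AlgebraicD X) := by
  exact ⟨⟨Stmt16Aux.contSp_to_contD hX, Stmt16Aux.contD_to_contSp⟩,
    ⟨Stmt16Aux.algSp_to_algD hX, Stmt16Aux.algD_to_algSp⟩⟩
end

section
/- Let L be a continuous dcpo. For any directed family 𝒢 (ordered by reverse inclusion) of nonempty Scott compact saturated subsets of L, the intersection ⋂𝒢 is a nonempty Scott compact saturated subset of L. -/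
/-!
The Scott space of a continuous dcpo is sober: an irreducible closed set `S` is the closure of
the directed supremum of the points way below points of `S`. Sober spaces are well-filtered: if
no member of the filtered family `𝒢` lies inside the open set `U`, a minimal closed subset of `Uᶜ`
meeting every member is irreducible, and its generic point lies in every saturated member, hence
in `⋂₀ 𝒢 \ U`. Applying this to `U = ∅` and to the union of an open cover of `⋂₀ 𝒢` gives
nonemptiness and compactness.
-/

open Set

variable {L : Type*} [CompletePartialOrder L] [TopologicalSpace L] [Topology.IsScott L Set.univ]

/-- The way-below relation in the dcpo `L`. -/
def wayBelow (x y : L) : Prop :=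
  ∀ d : Set L, d.Nonempty → DirectedOn (· ≤ ·) d → y ≤ sSup d → ∃ z ∈ d, x ≤ z

/-- `L` is a continuous dcpo: every element is the directed supremum of the elements
way below it. -/
def ContinuousDcpo (L : Type*) [CompletePartialOrder L] : Prop :=
  ∀ x : L, {y : L | wayBelow y x}.Nonempty ∧
    DirectedOn (· ≤ ·) {y : L | wayBelow y x} ∧ IsLUB {y : L | wayBelow y x} x

/-- `K` is saturated: it is the intersection of its open neighborhoods. -/
def Saturated (K : Set L) : Prop := K = ⋂₀ {U : Set L | IsOpen U ∧ K ⊆ U}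

section WellFiltered

variable {X : Type*} [TopologicalSpace X] {𝒢 : Set (Set X)}

lemma Saturated.mem_of_specializes {K : Set X} (hK : Saturated K) {p q : X} (hpq : p ⤳ q)
    (hq : q ∈ K) : p ∈ K := by
  rw [hK]
  exact mem_sInter.2 fun U hU => hpq.mem_open hU.1 (hU.2 hq)

lemma Saturated.sInter (h𝒢 : ∀ K ∈ 𝒢, Saturated K) : Saturated (⋂₀ 𝒢) := by
  refine subset_antisymm (subset_sInter fun V hV => hV.2) fun x hx => mem_sInter.2 fun K hK => ?_
  rw [h𝒢 K hK]
  exact mem_sInter.2 fun V hV => mem_sInter.1 hx V ⟨hV.1, (sInter_subset_of_mem hK).trans hV.2⟩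

lemma exists_minimal_isClosed_inter_nonempty (hcomp : ∀ K ∈ 𝒢, IsCompact K) {F : Set X}
    (hF : IsClosed F) (hF𝒢 : ∀ K ∈ 𝒢, (F ∩ K).Nonempty) :
    ∃ C ⊆ F, Minimal (fun C => IsClosed C ∧ ∀ K ∈ 𝒢, (C ∩ K).Nonempty) C := by
  refine zorn_superset_nonempty _ (fun c hc hchain hcne => ?_) F ⟨hF, hF𝒢⟩
  have : Nonempty c := hcne.to_subtype
  have hcdir : Directed (· ⊇ ·) (fun C : c => (C : Set X)) := fun A B =>
    (hchain.total A.2 B.2).elim (fun h => ⟨A, subset_rfl, h⟩) (fun h => ⟨B, h, subset_rfl⟩)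
  refine ⟨⋂₀ c, ⟨isClosed_sInter fun C hC => (hc hC).1, fun K hK => ?_⟩,
    fun C hC => sInter_subset_of_mem hC⟩
  by_contra hempty
  rw [not_nonempty_iff_eq_empty, inter_comm, sInter_eq_iInter] at hempty
  obtain ⟨C, hC⟩ := (hcomp K hK).elim_directed_family_closed (fun C : c => (C : Set X))
    (fun C => (hc C.2).1) hempty hcdir
  exact ((hc C.2).2 K hK).ne_empty (by rwa [inter_comm])

lemma isPreirreducible_of_minimal_isClosed_inter_nonempty
    (hdir : DirectedOn (· ⊇ ·) 𝒢) {C : Set X}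
    (hC : Minimal (fun C => IsClosed C ∧ ∀ K ∈ 𝒢, (C ∩ K).Nonempty) C) : IsPreirreducible C := by
  rw [isPreirreducible_iff_isClosed_union_isClosed]
  intro Z₁ Z₂ hZ₁ hZ₂ hC₁₂
  by_contra! hnot
  have hmiss : ∀ Z, IsClosed Z → ¬ C ⊆ Z → ∃ K ∈ 𝒢, C ∩ Z ∩ K = ∅ := by
    intro Z hZ hCZ
    by_contra! hmeet
    exact hCZ ((hC.le_of_le ⟨hC.prop.1.inter hZ, hmeet⟩ inter_subset_left).trans
      inter_subset_right)
  obtain ⟨K₁, hK₁, hCK₁⟩ := hmiss Z₁ hZ₁ hnot.1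
  obtain ⟨K₂, hK₂, hCK₂⟩ := hmiss Z₂ hZ₂ hnot.2
  obtain ⟨K, hK, hKK₁, hKK₂⟩ := hdir K₁ hK₁ K₂ hK₂
  obtain ⟨x, hxC, hxK⟩ := hC.prop.2 K hK
  rcases hC₁₂ hxC with hx | hx
  · exact hCK₁.subset ⟨⟨hxC, hx⟩, hKK₁ hxK⟩
  · exact hCK₂.subset ⟨⟨hxC, hx⟩, hKK₂ hxK⟩

theorem QuasiSober.exists_mem_subset_of_sInter_subset [QuasiSober X] (hne : 𝒢.Nonempty)
    (hdir : DirectedOn (· ⊇ ·) 𝒢) (hcomp : ∀ K ∈ 𝒢, IsCompact K)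
    (hsat : ∀ K ∈ 𝒢, Saturated K) {U : Set X} (hU : IsOpen U)
    (hsub : ⋂₀ 𝒢 ⊆ U) : ∃ K ∈ 𝒢, K ⊆ U := by
  by_contra! hmeet
  obtain ⟨C, hCU, hC⟩ := exists_minimal_isClosed_inter_nonempty hcomp hU.isClosed_compl
    fun K hK => by rw [inter_comm]; exact sdiff_nonempty.2 (hmeet K hK)
  obtain ⟨K₀, hK₀⟩ := hne
  have hCirr : IsIrreducible C :=
    ⟨(hC.prop.2 K₀ hK₀).mono inter_subset_left,
      isPreirreducible_of_minimal_isClosed_inter_nonempty hdir hC⟩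
  obtain ⟨p, hp⟩ := QuasiSober.sober hCirr hC.prop.1
  have hp𝒢 : p ∈ ⋂₀ 𝒢 := mem_sInter.2 fun K hK => by
    obtain ⟨q, hqC, hqK⟩ := hC.prop.2 K hK
    exact (hsat K hK).mem_of_specializes (hp.specializes hqC) hqK
  exact hCU hp.mem (hsub hp𝒢)

end WellFiltered

section WayBelow

variable {P : Type*} [CompletePartialOrder P] {x y z : P}

lemma wayBelow.le (h : wayBelow x y) : x ≤ y := by
  have hsup : sSup {y} = y := (CompletePartialOrder.lubOfDirected _ (directedOn_singleton y)).unique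
    isLUB_singleton
  obtain ⟨z, rfl, hxz⟩ := h {y} (singleton_nonempty y) (directedOn_singleton y) hsup.ge
  exact hxz

lemma wayBelow.trans_le (h : wayBelow x y) (hyz : y ≤ z) : wayBelow x z :=
  fun d hd hdir hzd => h d hd hdir (hyz.trans hzd)

lemma LE.le.trans_wayBelow (hxy : x ≤ y) (h : wayBelow y z) : wayBelow x z := fun d hd hdir hzd =>
  let ⟨w, hwd, hyw⟩ := h d hd hdir hzd
  ⟨w, hwd, hxy.trans hyw⟩

lemma ContinuousDcpo.exists_wayBelow_wayBelow (hcont : ContinuousDcpo P) (h : wayBelow x y) :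
    ∃ z, wayBelow x z ∧ wayBelow z y := by
  set E : Set P := {a | ∃ b, wayBelow a b ∧ wayBelow b y}
  have hEne : E.Nonempty := by
    obtain ⟨b, hb⟩ := (hcont y).1
    obtain ⟨a, ha⟩ := (hcont b).1
    exact ⟨a, b, ha, hb⟩
  have hEdir : DirectedOn (· ≤ ·) E := by
    rintro a₁ ⟨b₁, hab₁, hb₁⟩ a₂ ⟨b₂, hab₂, hb₂⟩
    obtain ⟨b, hb, hb₁b, hb₂b⟩ := (hcont y).2.1 b₁ hb₁ b₂ hb₂
    obtain ⟨a, ha, ha₁a, ha₂a⟩ := (hcont b).2.1 a₁ (hab₁.trans_le hb₁b) a₂ (hab₂.trans_le hb₂b)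
    exact ⟨a, ⟨b, ha, hb⟩, ha₁a, ha₂a⟩
  have hyE : y ≤ sSup E := (hcont y).2.2.2 fun b hb =>
    (hcont b).2.2.2 fun a ha => (CompletePartialOrder.lubOfDirected E hEdir).1 ⟨b, ha, hb⟩
  obtain ⟨a, ⟨b, hab, hby⟩, hxa⟩ := h E hEne hEdir hyE
  exact ⟨b, hxa.trans_wayBelow hab, hby⟩

end WayBelow

lemma ContinuousDcpo.isOpen_setOf_wayBelow (hcont : ContinuousDcpo L) (x : L) :
    IsOpen {y : L | wayBelow x y} := by
  rw [Topology.IsScott.isOpen_iff_isUpperSet_and_dirSupInaccOn (D := univ)]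
  refine ⟨fun a b hab ha => ha.trans_le hab, fun d _ hdne hdir a hlub ha => ?_⟩
  obtain ⟨z, hxz, hza⟩ := hcont.exists_wayBelow_wayBelow ha
  obtain ⟨w, hwd, hzw⟩ :=
    hza d hdne hdir (hlub.unique (CompletePartialOrder.lubOfDirected d hdir)).le
  exact ⟨w, hwd, hxz.trans_le hzw⟩

lemma ContinuousDcpo.directedOn_wayBelow_of_isPreirreducible (hcont : ContinuousDcpo L)
    {S : Set L} (hS : IsPreirreducible S) : DirectedOn (· ≤ ·) {y | ∃ c ∈ S, wayBelow y c} := by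
  rintro y₁ ⟨c₁, hc₁, hy₁⟩ y₂ ⟨c₂, hc₂, hy₂⟩
  obtain ⟨c, hc, hy₁c, hy₂c⟩ := hS _ _ (hcont.isOpen_setOf_wayBelow y₁)
    (hcont.isOpen_setOf_wayBelow y₂) ⟨c₁, hc₁, hy₁⟩ ⟨c₂, hc₂, hy₂⟩
  obtain ⟨z, hz, hy₁z, hy₂z⟩ := (hcont c).2.1 y₁ hy₁c y₂ hy₂c
  exact ⟨z, ⟨c, hc, hz⟩, hy₁z, hy₂z⟩

lemma ContinuousDcpo.quasiSober (hcont : ContinuousDcpo L) : QuasiSober L where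
  sober {S} hS hSc := by
    set D : Set L := {y | ∃ c ∈ S, wayBelow y c}
    have hDS : D ⊆ S := fun y ⟨c, hc, hyc⟩ => Topology.IsScott.isLowerSet_of_isClosed hSc hyc.le hc
    have hDne : D.Nonempty := by
      obtain ⟨c, hc⟩ := hS.nonempty
      obtain ⟨y, hy⟩ := (hcont c).1
      exact ⟨y, c, hc, hy⟩
    have hDdir := hcont.directedOn_wayBelow_of_isPreirreducible hS.isPreirreducible
    have hD := CompletePartialOrder.lubOfDirected D hDdir
    have hSD : S ⊆ Iic (sSup D) := fun c hc => (hcont c).2.2.2 fun y hy => hD.1 ⟨c, hc, hy⟩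
    refine ⟨sSup D, (isGenericPoint_iff_forall_closed hSc ?_).2 fun Z hZ hDZ => ?_⟩
    · exact Topology.IsScott.dirSupClosed_of_isClosed hSc hDS hDne hDdir hD
    · exact hSD.trans ((Topology.IsScott.isLowerSet_of_isClosed hZ).Iic_subset hDZ)

/-- In a continuous dcpo, a directed (under reverse inclusion) family of nonempty Scott
compact saturated sets has nonempty Scott compact saturated intersection. -/
theorem stmt_17 (hcont : ContinuousDcpo L) (𝒢 : Set (Set L)) (hne : 𝒢.Nonempty)
    (hdir : DirectedOn (fun A B : Set L => B ⊆ A) 𝒢)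
    (hmem : ∀ K ∈ 𝒢, K.Nonempty ∧ IsCompact K ∧ Saturated K) :
    (⋂₀ 𝒢).Nonempty ∧ IsCompact (⋂₀ 𝒢) ∧ Saturated (⋂₀ 𝒢) := by
  have : QuasiSober L := hcont.quasiSober
  have hwf {U : Set L} (hU : IsOpen U) (hsub : ⋂₀ 𝒢 ⊆ U) : ∃ K ∈ 𝒢, K ⊆ U :=
    QuasiSober.exists_mem_subset_of_sInter_subset hne hdir (fun K hK => (hmem K hK).2.1)
      (fun K hK => (hmem K hK).2.2) hU hsub
  refine ⟨?_, isCompact_of_finite_subcover fun V hV hcover => ?_,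
    Saturated.sInter fun K hK => (hmem K hK).2.2⟩
  · by_contra! hempty
    obtain ⟨K, hK, hKempty⟩ := hwf isOpen_empty hempty.subset
    exact (hmem K hK).1.ne_empty (subset_empty_iff.1 hKempty)
  · obtain ⟨K, hK, hKV⟩ := hwf (isOpen_iUnion hV) hcover
    obtain ⟨t, ht⟩ := (hmem K hK).2.1.elim_finite_subcover V hV hKV
    exact ⟨t, (sInter_subset_of_mem hK).trans ht⟩
end
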